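/- arXiv:2507.14872 — 3 statements merged into one kernel-verified Lean document; each statement's English description precedes it below -/
import Mathlib

section
/- If f : Ω → ℂ is analytic and injective on an open set Ω ⊆ ℂ, then f'(z) ≠ 0 for every z ∈ Ω. -/
/-!
If `f' z₀ = 0`, then `f - f z₀` vanishes to some order `n ≥ 2` at `z₀` (the order is finite because
`f` is not locally constant), so near `z₀` it equals `φ ^ n` with `φ (z₀) = 0` and `φ' (z₀) ≠ 0`.
By the inverse function theorem `φ` maps neighbourhoods of `z₀` onto neighbourhoods of `0`, and on
any of those `w ↦ w ^ n` identifies `w` with `ζ w` for a primitive `n`-th root of unity `ζ`.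
-/

open Complex Filter Metric Set Topology

theorem Set.InjOn.not_eventually_eq {X Y : Type*} [TopologicalSpace X] {x : X} [(𝓝[≠] x).NeBot]
    {f : X → Y} {s : Set X} (hf : InjOn f s) (hs : s ∈ 𝓝 x) (c : Y) :
    ¬ ∀ᶠ z in 𝓝 x, f z = c := by
  intro h
  obtain ⟨z, ⟨hzc, hzs⟩, hzx⟩ :=
    (((h.and hs).filter_mono nhdsWithin_le_nhds).and (self_mem_nhdsWithin (s := {x}ᶜ))).exists
  exact hzx (hf hzs (mem_of_mem_nhds hs) (hzc.trans h.self_of_nhds.symm))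

theorem AnalyticAt.exists_pow_eq {g : ℂ → ℂ} {z₀ : ℂ} {n : ℕ} (hg : AnalyticAt ℂ g z₀)
    (hg0 : g z₀ ≠ 0) (hn : n ≠ 0) : ∃ h : ℂ → ℂ, AnalyticAt ℂ h z₀ ∧ h ^ n = g := by
  -- dividing by `g z₀` puts the base near `1 ∈ slitPlane`, where the principal power is analytic
  refine ⟨fun z => g z₀ ^ (n⁻¹ : ℂ) * (g z / g z₀) ^ (n⁻¹ : ℂ), ?_, ?_⟩
  · exact analyticAt_const.mul
      ((hg.div analyticAt_const hg0).cpow analyticAt_const (by simp [hg0]))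
  · ext z
    simp [mul_pow, cpow_nat_inv_pow _ hn, hg0, mul_div_cancel₀]

theorem AnalyticAt.exists_eventuallyEq_pow {F : ℂ → ℂ} {z₀ : ℂ} {n : ℕ} (hF : AnalyticAt ℂ F z₀)
    (hn : analyticOrderAt F z₀ = n) (hn0 : n ≠ 0) :
    ∃ φ : ℂ → ℂ, ∃ φ' ≠ 0, HasStrictDerivAt φ φ' z₀ ∧ φ z₀ = 0 ∧ F =ᶠ[𝓝 z₀] φ ^ n := by
  obtain ⟨g, hg, hg0, hFg⟩ := hF.analyticOrderAt_eq_natCast.mp hn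
  obtain ⟨h, hh, rfl⟩ := hg.exists_pow_eq hg0 hn0
  have hh0 : h z₀ ≠ 0 := fun h0 => hg0 (by simp [h0, hn0])
  refine ⟨fun z => (z - z₀) * h z, h z₀, hh0, ?_, by simp, ?_⟩
  · simpa using
      ((hasStrictDerivAt_id z₀).sub (hasStrictDerivAt_const z₀ z₀)).fun_mul hh.hasStrictDerivAt
  · filter_upwards [hFg] with z hz
    simp [hz, mul_pow]

theorem not_injOn_pow_of_mem_nhds_zero {n : ℕ} (hn : 2 ≤ n) {s : Set ℂ} (hs : s ∈ 𝓝 0) :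
    ¬ InjOn (· ^ n) s := by
  intro hinj
  obtain ⟨ε, hε, hball⟩ := Metric.mem_nhds_iff.mp hs
  have hζ := isPrimitiveRoot_exp n (by omega)
  set ζ := exp (2 * Real.pi * I / n)
  set w : ℂ := ((ε / 2 : ℝ) : ℂ)
  have hw : ‖w‖ = ε / 2 := by simp [w, abs_of_pos hε]
  have hw0 : w ≠ 0 := norm_ne_zero_iff.mp (by rw [hw]; positivity)
  have hws : w ∈ s := hball (by rw [mem_ball_zero_iff, hw]; linarith)
  have hζws : ζ * w ∈ s := hball (by
    rw [mem_ball_zero_iff, norm_mul, hζ.norm'_eq_one (by omega), one_mul, hw]; linarith)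
  have hζw : ζ * w = w := hinj hζws hws (by simp [mul_pow, hζ.pow_eq_one])
  exact hζ.ne_one (by omega) (mul_left_eq_self₀.mp hζw |>.resolve_right hw0)

theorem not_injOn_of_eventuallyEq_pow {F φ : ℂ → ℂ} {z₀ : ℂ} {n : ℕ} (hn : 2 ≤ n)
    (hφ : map φ (𝓝 z₀) = 𝓝 0) (hFφ : F =ᶠ[𝓝 z₀] φ ^ n) {s : Set ℂ} (hs : s ∈ 𝓝 z₀) :
    ¬ InjOn F s := by
  intro hinj
  have himg : φ '' ({z | F z = φ z ^ n} ∩ s) ∈ 𝓝 0 := hφ ▸ image_mem_map (inter_mem hFφ hs)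
  refine not_injOn_pow_of_mem_nhds_zero hn himg ?_
  rintro _ ⟨a, ⟨ha, has⟩, rfl⟩ _ ⟨b, ⟨hb, hbs⟩, rfl⟩ hab
  exact congrArg φ (hinj has hbs (by simp_all))

/-- Injective holomorphic functions have nonvanishing derivative. -/
theorem deriv_ne_zero_of_injOn (Ω : Set ℂ) (hΩ : IsOpen Ω) (f : ℂ → ℂ)
    (hf : DifferentiableOn ℂ f Ω) (hinj : Set.InjOn f Ω) :
    ∀ z ∈ Ω, deriv f z ≠ 0 := by
  intro z₀ hz₀ hd
  have hΩ₀ : Ω ∈ 𝓝 z₀ := hΩ.mem_nhds hz₀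
  set F : ℂ → ℂ := fun z => f z - f z₀ with hF
  have hFinj : InjOn F Ω := fun a ha b hb hab => hinj ha hb (sub_left_inj.mp hab)
  have hFA : AnalyticAt ℂ F z₀ := (hf.analyticAt hΩ₀).sub analyticAt_const
  obtain ⟨n, hn⟩ : ∃ n : ℕ, (n : ℕ∞) = analyticOrderAt F z₀ :=
    ENat.ne_top_iff_exists.mp fun htop =>
      hFinj.not_eventually_eq hΩ₀ 0 (analyticOrderAt_eq_top.mp htop)
  have hn0 : n ≠ 0 := by
    rintro rfl
    exact analyticOrderAt_ne_zero.mpr ⟨hFA, sub_self _⟩ hn.symm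
  obtain ⟨φ, φ', hφ', hφ, hφ0, hFφ⟩ := hFA.exists_eventuallyEq_pow hn.symm hn0
  have hn1 : n ≠ 1 := by
    rintro rfl
    have hdF : deriv F z₀ = φ' := by
      rw [hFφ.deriv_eq, pow_one, hφ.hasDerivAt.deriv]
    exact hφ' (by rw [← hdF, hF, deriv_sub_const, hd])
  exact not_injOn_of_eventuallyEq_pow (by omega) (hφ0 ▸ hφ.map_nhds_eq hφ') hFφ hΩ₀ hFinj
end

section
/- Let 1 < R₁ and 1 < R₂, and suppose there exists a holomorphic bijection f from the annulus A₁ = {z : 1 < |z| < R₁} onto the annulus A₂ = {z : 1 < |z| < R₂}. Then R₁ = R₂. -/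
/-!
A holomorphic bijection `f` between the annuli is proper, so `‖f z‖` tends to `1` or to `R₂` as
`z` approaches a boundary circle, with one limit per circle because collars are connected. By the
maximum principle the two circles of `A₁` cannot go to the same circle of `A₂`, and after composing
with `w ↦ R₂ / w` we may assume `‖f z‖ → 1` on the inner and `‖f z‖ → R₂` on the outer circle.
In the logarithmic coordinate `z = exp ζ` the function `‖f z‖ * ‖z‖ ^ β` is the modulus of a
holomorphic function on a strip, so it obeys the maximum principle; for `β = ∓α`, with
`α = log R₂ / log R₁`, this gives `‖f z‖ = ‖z‖ ^ α`. Hence `f (exp ζ) = c * exp (α * ζ)`: going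
once around the annulus shows `α ∈ ℤ`, injectivity of `f` shows `α⁻¹ ∈ ℤ`, so `α = 1`.
-/

open Set Filter Topology Complex

theorem Set.BijOn.isCompact_inter_preimage {X Y : Type*} [TopologicalSpace X]
    [TopologicalSpace Y] {f : X → Y} {U : Set X} {V : Set Y} (hbij : BijOn f U V)
    (ho : IsOpenMap (U.domRestrict f)) {K : Set Y} (hK : IsCompact K) (hKV : K ⊆ V) :
    IsCompact (U ∩ f ⁻¹' K) := by
  rcases isEmpty_or_nonempty X with _ | _
  · exact (Set.toFinite _).isCompact
  have hinv := hbij.invOn_invFunOn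
  have hcont : ContinuousOn (Function.invFunOn f U) V :=
    hbij.image_eq ▸ ho.continuousOn_image_of_leftInvOn hinv.1
  have heq : U ∩ f ⁻¹' K = Function.invFunOn f U '' K := by
    ext z
    constructor
    · rintro ⟨hzU, hzK⟩
      exact ⟨f z, hzK, hinv.1 hzU⟩
    · rintro ⟨w, hwK, rfl⟩
      exact ⟨hbij.surjOn.mapsTo_invFunOn (hKV hwK), by
        rw [mem_preimage, hinv.2 (hKV hwK)]; exact hwK⟩
  rw [heq]
  exact hK.image_of_continuousOn (hcont.mono hKV)

theorem isOpenMap_domRestrict_of_injOn {U : Set ℂ} {f : ℂ → ℂ} (hU : IsOpen U)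
    (hUc : IsPreconnected U) (hUnt : U.Nontrivial) (hf : DifferentiableOn ℂ f U)
    (hinj : InjOn f U) : IsOpenMap (U.domRestrict f) := by
  rcases (hf.analyticOnNhd hU).is_constant_or_isOpen hUc with ⟨w, hw⟩ | hopen
  · obtain ⟨x, hx, y, hy, hxy⟩ := hUnt
    exact absurd (hinj hx hy ((hw x hx).trans (hw y hy).symm)) hxy
  · intro s hs
    rw [domRestrict_eq, image_comp]
    exact hopen _ (Subtype.coe_image_subset _ _) (hU.isOpenMap_subtype_val s hs)

section Dichotomy

variable {X Y : Type*} [TopologicalSpace Y] {L : Filter X} [L.NeBot] {φ : X → Y}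
  {y₁ y₂ : Y}

theorem tendsto_nhds_of_image_subset (hL : ∀ s ∈ L, ∃ t ∈ L, t ⊆ s ∧ IsPreconnected (φ '' t))
    (h : Tendsto φ L (𝓝 y₁ ⊔ 𝓝 y₂)) {U V : Set Y} (hU : IsOpen U) (hV : IsOpen V)
    (hUV : Disjoint U V) (hy₁ : y₁ ∈ U) (hy₂ : y₂ ∈ V) {t₀ : Set X} (ht₀ : t₀ ∈ L)
    (hφt₀ : φ '' t₀ ⊆ U) : Tendsto φ L (𝓝 y₁) := by
  rw [tendsto_def]
  intro s hs
  obtain ⟨W, hWs, hW, hy₁W⟩ := mem_nhds_iff.1 hs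
  have hWU : IsOpen (W ∩ U) := hW.inter hU
  obtain ⟨t, ht, htsub, htc⟩ := hL _ (inter_mem ht₀
    (h (union_mem_sup (hWU.mem_nhds ⟨hy₁W, hy₁⟩) (hV.mem_nhds hy₂))))
  rcases htc.subset_or_subset hWU hV (hUV.mono_left inter_subset_right)
      (image_subset_iff.2 fun x hx => (htsub hx).2) with htW | htV
  · exact mem_of_superset ht fun x hx => hWs (htW ⟨x, hx, rfl⟩).1
  · obtain ⟨x, hx⟩ := Filter.nonempty_of_mem ht
    exact absurd (htV ⟨x, hx, rfl⟩)
      (hUV.notMem_of_mem_left (hφt₀ ⟨x, (htsub hx).1, rfl⟩))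

theorem tendsto_nhds_or_tendsto_nhds_of_tendsto_sup [T2Space Y]
    (hL : ∀ s ∈ L, ∃ t ∈ L, t ⊆ s ∧ IsPreconnected (φ '' t)) (hy : y₁ ≠ y₂)
    (h : Tendsto φ L (𝓝 y₁ ⊔ 𝓝 y₂)) : Tendsto φ L (𝓝 y₁) ∨ Tendsto φ L (𝓝 y₂) := by
  obtain ⟨U, V, hU, hV, hy₁, hy₂, hUV⟩ := t2_separation hy
  obtain ⟨t, ht, htUV, htc⟩ := hL _ (h (union_mem_sup (hU.mem_nhds hy₁) (hV.mem_nhds hy₂)))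
  rcases htc.subset_or_subset hU hV hUV (image_subset_iff.2 htUV) with htU | htV
  · exact Or.inl (tendsto_nhds_of_image_subset hL h hU hV hUV hy₁ hy₂ ht htU)
  · exact Or.inr (tendsto_nhds_of_image_subset hL (sup_comm (𝓝 y₁) _ ▸ h) hV hU hUV.symm
      hy₂ hy₁ ht htV)

end Dichotomy

theorem exists_int_eq_of_exp_eq_one {x : ℝ} (h : exp (x * (2 * Real.pi * I)) = 1) :
    ∃ n : ℤ, x = n := by
  obtain ⟨n, hn⟩ := exp_eq_one_iff.1 h
  exact ⟨n, by exact_mod_cast (mul_right_cancel₀ two_pi_I_ne_zero hn : (x : ℂ) = n)⟩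

def annulus (a b : ℝ) : Set ℂ := {z : ℂ | a < ‖z‖ ∧ ‖z‖ < b}

section Annulus

variable {a b : ℝ}

theorem isOpen_annulus (a b : ℝ) : IsOpen (annulus a b) :=
  (isOpen_lt continuous_const continuous_norm).inter (isOpen_lt continuous_norm continuous_const)

theorem ne_zero_of_mem_annulus (ha : 0 ≤ a) {z : ℂ} (hz : z ∈ annulus a b) : z ≠ 0 :=
  norm_pos_iff.mp (ha.trans_lt hz.1)

theorem annulus_nonempty (ha : 0 ≤ a) (hab : a < b) : (annulus a b).Nonempty :=
  ⟨((a + b) / 2 : ℝ), by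
    simp only [annulus, mem_ofPred_eq, norm_real, Real.norm_eq_abs,
      abs_of_pos (by linarith : 0 < (a + b) / 2)]
    constructor <;> linarith⟩

theorem annulus_nontrivial (ha : 0 ≤ a) (hab : a < b) : (annulus a b).Nontrivial := by
  obtain ⟨z, hz⟩ := annulus_nonempty ha hab
  refine ⟨z, hz, -z, by simpa [annulus] using hz, fun h => ne_zero_of_mem_annulus ha hz ?_⟩
  linear_combination h / 2

theorem mem_exp_preimage_annulus {ζ : ℂ} :
    ζ ∈ exp ⁻¹' annulus a b ↔ a < Real.exp ζ.re ∧ Real.exp ζ.re < b := by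
  simp only [mem_preimage, annulus, mem_ofPred_eq, norm_exp]

theorem add_mul_I_mem_exp_preimage_annulus {ζ : ℂ} (hζ : ζ ∈ exp ⁻¹' annulus a b) (t : ℝ) :
    ζ + t * I ∈ exp ⁻¹' annulus a b := by
  rw [mem_exp_preimage_annulus] at hζ ⊢
  simpa using hζ

theorem isPreconnected_exp_preimage_annulus (a b : ℝ) :
    IsPreconnected (exp ⁻¹' annulus a b) := by
  have hstrip : exp ⁻¹' annulus a b = reLm ⁻¹' (Real.exp ⁻¹' Ioo a b) := by
    ext ζ; exact mem_exp_preimage_annulus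
  rw [hstrip]
  exact ((ordConnected_Ioo.preimage_mono Real.exp_monotone).convex.linear_preimage
    reLm).isPreconnected

theorem exp_image_exp_preimage_annulus (ha : 0 ≤ a) :
    exp '' (exp ⁻¹' annulus a b) = annulus a b :=
  image_preimage_eq_of_subset fun z hz => by
    rw [range_exp]; exact ne_zero_of_mem_annulus ha hz

theorem isPreconnected_annulus (ha : 0 ≤ a) : IsPreconnected (annulus a b) := by
  rw [← exp_image_exp_preimage_annulus ha]
  exact (isPreconnected_exp_preimage_annulus a b).image _ continuous_exp.continuousOn

theorem isCompact_closedAnnulus (a b : ℝ) : IsCompact {z : ℂ | a ≤ ‖z‖ ∧ ‖z‖ ≤ b} :=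
  (isCompact_closedBall (0 : ℂ) b).of_isClosed_subset
    ((isClosed_le continuous_const continuous_norm).inter
      (isClosed_le continuous_norm continuous_const))
    fun z hz => by simpa using hz.2

theorem annulus_mem_comap_norm (hab : a < b) :
    annulus a b ∈ comap (‖·‖) (𝓝[>] a ⊔ 𝓝[<] b) :=
  preimage_mem_comap (mem_sup.2 ⟨Ioo_mem_nhdsGT hab, Ioo_mem_nhdsLT hab⟩)

theorem neBot_comap_norm_nhdsGT (ha : 0 ≤ a) : (comap (‖·‖) (𝓝[>] a) : Filter ℂ).NeBot :=
  NeBot.comap_of_range_mem inferInstance <| mem_of_superset self_mem_nhdsWithin fun r hr =>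
    ⟨(r : ℂ), by simp [abs_of_pos (ha.trans_lt hr)]⟩

theorem neBot_comap_norm_nhdsLT (hb : 0 < b) : (comap (‖·‖) (𝓝[<] b) : Filter ℂ).NeBot :=
  NeBot.comap_of_range_mem inferInstance <| mem_of_superset (Ioo_mem_nhdsLT hb) fun r hr =>
    ⟨(r : ℂ), by simp [abs_of_pos hr.1]⟩

theorem eventually_notMem_of_isCompact {K : Set ℂ} (hK : IsCompact K) (hKA : K ⊆ annulus a b) :
    ∀ᶠ z in comap (‖·‖) (𝓝[>] a ⊔ 𝓝[<] b), z ∉ K := by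
  have hclosed : IsClosed ((‖·‖) '' K) := (hK.image continuous_norm).isClosed
  have ha : a ∉ (‖·‖) '' K := by rintro ⟨z, hz, hza⟩; exact (hKA hz).1.ne' hza
  have hb : b ∉ (‖·‖) '' K := by rintro ⟨z, hz, hzb⟩; exact (hKA hz).2.ne hzb
  refine mem_comap.2 ⟨((‖·‖) '' K)ᶜ, mem_sup.2 ⟨?_, ?_⟩, fun z hz hzK => hz ⟨z, hzK, rfl⟩⟩
  · exact mem_nhdsWithin_of_mem_nhds (hclosed.isOpen_compl.mem_nhds ha)
  · exact mem_nhdsWithin_of_mem_nhds (hclosed.isOpen_compl.mem_nhds hb)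

theorem exists_pos_forall_of_eventually_comap_norm {p : ℂ → Prop}
    (h : ∀ᶠ z in comap (‖·‖) (𝓝[>] a ⊔ 𝓝[<] b), p z) :
    ∃ ε > 0, ∀ z ∈ annulus a b, ¬ p z → a + ε ≤ ‖z‖ ∧ ‖z‖ ≤ b - ε := by
  obtain ⟨s, hs, hsp⟩ := mem_comap.1 h
  obtain ⟨u, hu, hus⟩ := mem_nhdsGT_iff_exists_Ioo_subset.1 (mem_sup.1 hs).1
  obtain ⟨l, hl, hls⟩ := mem_nhdsLT_iff_exists_Ioo_subset.1 (mem_sup.1 hs).2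
  refine ⟨min (u - a) (b - l), lt_min (sub_pos.2 hu) (sub_pos.2 hl), fun z hz hpz => ?_⟩
  have hzs : ‖z‖ ∉ s := fun h' => hpz (hsp h')
  constructor
  · by_contra! h'
    exact hzs (hus ⟨hz.1, by linarith [min_le_left (u - a) (b - l)]⟩)
  · by_contra! h'
    exact hzs (hls ⟨by linarith [min_le_right (u - a) (b - l)], hz.2⟩)

theorem exists_isPreconnected_image_of_mem_comap_nhdsGT (ha : 0 ≤ a) (hab : a < b)
    {φ : ℂ → ℝ} (hφ : ContinuousOn φ (annulus a b)) {s : Set ℂ}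
    (hs : s ∈ comap (‖·‖) (𝓝[>] a)) :
    ∃ t ∈ comap (‖·‖) (𝓝[>] a), t ⊆ s ∧ IsPreconnected (φ '' t) := by
  obtain ⟨s', hs', hs's⟩ := mem_comap.1 hs
  obtain ⟨u, hu, hus⟩ := mem_nhdsGT_iff_exists_Ioo_subset.1 hs'
  refine ⟨annulus a (min u b), preimage_mem_comap (Ioo_mem_nhdsGT (lt_min hu hab)),
    fun z hz => hs's (hus ⟨hz.1, hz.2.trans_le (min_le_left _ _)⟩),
    (isPreconnected_annulus ha).image _ (hφ.mono fun z hz => ⟨hz.1, ?_⟩)⟩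
  exact hz.2.trans_le (min_le_right _ _)

theorem exists_isPreconnected_image_of_mem_comap_nhdsLT (ha : 0 ≤ a) (hab : a < b)
    {φ : ℂ → ℝ} (hφ : ContinuousOn φ (annulus a b)) {s : Set ℂ}
    (hs : s ∈ comap (‖·‖) (𝓝[<] b)) :
    ∃ t ∈ comap (‖·‖) (𝓝[<] b), t ⊆ s ∧ IsPreconnected (φ '' t) := by
  obtain ⟨s', hs', hs's⟩ := mem_comap.1 hs
  obtain ⟨l, hl, hls⟩ := mem_nhdsLT_iff_exists_Ioo_subset.1 hs'
  refine ⟨annulus (max l a) b, preimage_mem_comap (Ioo_mem_nhdsLT (max_lt hl hab)),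
    fun z hz => hs's (hls ⟨(le_max_left _ _).trans_lt hz.1, hz.2⟩),
    (isPreconnected_annulus (ha.trans (le_max_right _ _))).image _
      (hφ.mono fun z hz => ⟨?_, hz.2⟩)⟩
  exact (le_max_right _ _).trans_lt hz.1

end Annulus

section MaximumPrinciple

variable {a b β : ℝ} {f : ℂ → ℂ}

theorem norm_mul_exp_ofReal_mul (f : ℂ → ℂ) (β : ℝ) (ζ : ℂ) :
    ‖f (exp ζ) * exp (β * ζ)‖ = ‖f (exp ζ)‖ * ‖exp ζ‖ ^ β := by
  rw [norm_mul, norm_exp, norm_exp, re_ofReal_mul, mul_comm β, Real.exp_mul]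

theorem continuousOn_norm_mul_rpow (ha : 0 ≤ a) (hf : DifferentiableOn ℂ f (annulus a b)) :
    ContinuousOn (fun z => ‖f z‖ * ‖z‖ ^ β) (annulus a b) :=
  hf.continuousOn.norm.mul (continuous_norm.continuousOn.rpow_const fun _ hz =>
    Or.inl (norm_ne_zero_iff.2 (ne_zero_of_mem_annulus ha hz)))

theorem exists_forall_comp_exp_mul_exp_eq_of_isMaxOn (ha : 0 ≤ a)
    (hf : DifferentiableOn ℂ f (annulus a b)) {z₀ : ℂ} (hz₀ : z₀ ∈ annulus a b)
    (hmax : IsMaxOn (fun z => ‖f z‖ * ‖z‖ ^ β) (annulus a b) z₀) :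
    ∃ c, ∀ ζ ∈ exp ⁻¹' annulus a b, f (exp ζ) * exp (β * ζ) = c := by
  have hG : DifferentiableOn ℂ (fun ζ => f (exp ζ) * exp (β * ζ)) (exp ⁻¹' annulus a b) :=
    (hf.comp differentiable_exp.differentiableOn fun _ hζ => hζ).mul
      (differentiable_exp.comp (differentiable_id.const_mul _)).differentiableOn
  have hlog : exp (log z₀) = z₀ := exp_log (ne_zero_of_mem_annulus ha hz₀)
  have hmem : log z₀ ∈ exp ⁻¹' annulus a b := by rw [mem_preimage, hlog]; exact hz₀
  refine ⟨_, fun ζ hζ => Complex.eqOn_of_isPreconnected_of_isMaxOn_norm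
    (isPreconnected_exp_preimage_annulus a b) ((isOpen_annulus a b).preimage continuous_exp)
    hG hmem (isMaxOn_iff.2 fun ξ hξ => ?_) hζ⟩
  rw [Function.comp_apply, Function.comp_apply, norm_mul_exp_ofReal_mul,
    norm_mul_exp_ofReal_mul, hlog]
  exact isMaxOn_iff.1 hmax _ hξ

theorem norm_mul_rpow_le_of_tendsto (ha : 0 ≤ a) (hf : DifferentiableOn ℂ f (annulus a b))
    {M : ℝ} (hin : Tendsto (fun z => ‖f z‖ * ‖z‖ ^ β) (comap (‖·‖) (𝓝[>] a)) (𝓝 M))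
    (hout : Tendsto (fun z => ‖f z‖ * ‖z‖ ^ β) (comap (‖·‖) (𝓝[<] b)) (𝓝 M))
    {z : ℂ} (hz : z ∈ annulus a b) : ‖f z‖ * ‖z‖ ^ β ≤ M := by
  set u := fun z : ℂ => ‖f z‖ * ‖z‖ ^ β
  have hlim : Tendsto u (comap (‖·‖) (𝓝[>] a ⊔ 𝓝[<] b)) (𝓝 M) := by
    rw [comap_sup]; exact hin.sup hout
  by_contra! hMz
  have hu : ContinuousOn u (annulus a b) := continuousOn_norm_mul_rpow ha hf
  obtain ⟨ε, hε, hcollar⟩ :=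
    exists_pos_forall_of_eventually_comap_norm (hlim.eventually (gt_mem_nhds hMz))
  set K := {w : ℂ | a + ε ≤ ‖w‖ ∧ ‖w‖ ≤ b - ε}
  have hKA : K ⊆ annulus a b := fun w hw => ⟨by linarith [hw.1], by linarith [hw.2]⟩
  have hsuper : ∀ w ∈ annulus a b, u z ≤ u w → w ∈ K := fun w hw huw =>
    hcollar w hw (not_lt.2 huw)
  have hC : IsCompact (K ∩ u ⁻¹' Ici (u z)) :=
    (isCompact_closedAnnulus _ _).of_isClosed_subset ((hu.mono hKA).preimage_isClosed_of_isClosed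
      (isCompact_closedAnnulus _ _).isClosed isClosed_Ici) inter_subset_left
  obtain ⟨z₁, hz₁, hmax₁⟩ := hC.exists_isMaxOn ⟨z, hsuper z hz le_rfl, le_refl (u z)⟩
    (hu.mono (inter_subset_left.trans hKA))
  have hmax : IsMaxOn u (annulus a b) z₁ := isMaxOn_iff.2 fun w hw => by
    rcases le_or_gt (u z) (u w) with h | h
    · exact isMaxOn_iff.1 hmax₁ w ⟨hsuper w hw h, h⟩
    · exact h.le.trans hz₁.2
  obtain ⟨c, hc⟩ := exists_forall_comp_exp_mul_exp_eq_of_isMaxOn ha hf (hKA hz₁.1) hmax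
  have hconst : ∀ w ∈ annulus a b, u w = ‖c‖ := fun w hw => by
    have hw' : exp (log w) = w := exp_log (ne_zero_of_mem_annulus ha hw)
    have := norm_mul_exp_ofReal_mul f β (log w)
    rw [hc _ (by rw [mem_preimage, hw']; exact hw), hw'] at this
    exact this.symm
  have : (comap (‖·‖) (𝓝[>] a ⊔ 𝓝[<] b) : Filter ℂ).NeBot :=
    (neBot_comap_norm_nhdsGT ha).mono (comap_mono le_sup_left)
  have hM : M = ‖c‖ := tendsto_nhds_unique hlim <| tendsto_const_nhds.congr' <|
    eventually_of_mem (annulus_mem_comap_norm (hz.1.trans hz.2)) fun w hw => (hconst w hw).symm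
  linarith [hconst z hz]

theorem norm_le_of_tendsto (ha : 0 ≤ a) (hf : DifferentiableOn ℂ f (annulus a b)) {M : ℝ}
    (hin : Tendsto (‖f ·‖) (comap (‖·‖) (𝓝[>] a)) (𝓝 M))
    (hout : Tendsto (‖f ·‖) (comap (‖·‖) (𝓝[<] b)) (𝓝 M)) {z : ℂ} (hz : z ∈ annulus a b) :
    ‖f z‖ ≤ M := by
  simpa using norm_mul_rpow_le_of_tendsto (β := 0) ha hf (by simpa using hin)
    (by simpa using hout) hz

end MaximumPrinciple

theorem tendsto_norm_of_isCompact_inter_preimage {a₁ b₁ a₂ b₂ : ℝ} {f : ℂ → ℂ}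
    (hmaps : MapsTo f (annulus a₁ b₁) (annulus a₂ b₂)) (hab₁ : a₁ < b₁)
    (hproper : ∀ K, IsCompact K → K ⊆ annulus a₂ b₂ → IsCompact (annulus a₁ b₁ ∩ f ⁻¹' K)) :
    Tendsto (‖f ·‖) (comap (‖·‖) (𝓝[>] a₁ ⊔ 𝓝[<] b₁)) (𝓝 a₂ ⊔ 𝓝 b₂) := by
  rw [tendsto_def]
  intro s hs
  obtain ⟨δ₁, hδ₁, hs₁⟩ := Metric.mem_nhds_iff.1 (mem_sup.1 hs).1
  obtain ⟨δ₂, hδ₂, hs₂⟩ := Metric.mem_nhds_iff.1 (mem_sup.1 hs).2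
  set δ := min δ₁ δ₂
  have hδ : 0 < δ := lt_min hδ₁ hδ₂
  set K := {w : ℂ | a₂ + δ ≤ ‖w‖ ∧ ‖w‖ ≤ b₂ - δ}
  have hKA : K ⊆ annulus a₂ b₂ := fun w hw => ⟨by linarith [hw.1], by linarith [hw.2]⟩
  filter_upwards [eventually_notMem_of_isCompact (hproper K (isCompact_closedAnnulus _ _) hKA)
    inter_subset_left, annulus_mem_comap_norm hab₁] with z hzK hz
  have hfz := hmaps hz
  have hfzK : ¬ (a₂ + δ ≤ ‖f z‖ ∧ ‖f z‖ ≤ b₂ - δ) := fun h => hzK ⟨hz, h⟩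
  rw [not_and_or, not_le, not_le] at hfzK
  rcases hfzK with h | h
  · exact hs₁ (Real.ball_eq_Ioo _ _ ▸ ⟨by linarith [hfz.1], by linarith [min_le_left δ₁ δ₂]⟩)
  · exact hs₂ (Real.ball_eq_Ioo _ _ ▸ ⟨by linarith [min_le_right δ₁ δ₂], by linarith [hfz.2]⟩)

section Modulus

variable {R₁ R₂ : ℝ} {f : ℂ → ℂ}

theorem tendsto_norm_of_bijOn (h₁ : 1 < R₁) (h₂ : 1 < R₂)
    (hf : DifferentiableOn ℂ f (annulus 1 R₁)) (hbij : BijOn f (annulus 1 R₁) (annulus 1 R₂)) :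
    Tendsto (‖f ·‖) (comap (‖·‖) (𝓝[>] 1)) (𝓝 1) ∧
        Tendsto (‖f ·‖) (comap (‖·‖) (𝓝[<] R₁)) (𝓝 R₂) ∨
      Tendsto (‖f ·‖) (comap (‖·‖) (𝓝[>] 1)) (𝓝 R₂) ∧
        Tendsto (‖f ·‖) (comap (‖·‖) (𝓝[<] R₁)) (𝓝 1) := by
  have hopen := isOpenMap_domRestrict_of_injOn (isOpen_annulus 1 R₁)
    (isPreconnected_annulus zero_le_one) (annulus_nontrivial zero_le_one h₁) hf hbij.injOn
  have hlim := tendsto_norm_of_isCompact_inter_preimage hbij.mapsTo h₁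
    fun K hK hKA => hbij.isCompact_inter_preimage hopen hK hKA
  rw [comap_sup, tendsto_sup] at hlim
  have hφ : ContinuousOn (‖f ·‖) (annulus 1 R₁) := hf.continuousOn.norm
  have := neBot_comap_norm_nhdsGT (zero_le_one' ℝ)
  have := neBot_comap_norm_nhdsLT (zero_lt_one.trans h₁)
  obtain ⟨z, hz⟩ := annulus_nonempty zero_le_one h₁
  rcases tendsto_nhds_or_tendsto_nhds_of_tendsto_sup
      (fun s hs => exists_isPreconnected_image_of_mem_comap_nhdsGT zero_le_one h₁ hφ hs)
      h₂.ne hlim.1 with hin | hin <;>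
    rcases tendsto_nhds_or_tendsto_nhds_of_tendsto_sup
      (fun s hs => exists_isPreconnected_image_of_mem_comap_nhdsLT zero_le_one h₁ hφ hs)
      h₂.ne hlim.2 with hout | hout
  · have := norm_le_of_tendsto zero_le_one hf hin hout hz
    exact absurd (hbij.mapsTo hz).1 this.not_gt
  · exact Or.inl ⟨hin, hout⟩
  · exact Or.inr ⟨hin, hout⟩
  · have hf0 : ∀ w ∈ annulus 1 R₁, f w ≠ 0 := fun w hw =>
      ne_zero_of_mem_annulus zero_le_one (hbij.mapsTo hw)
    have := norm_le_of_tendsto (f := fun w => (f w)⁻¹) zero_le_one (hf.inv hf0)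
      (by simpa using hin.inv₀ (by positivity)) (by simpa using hout.inv₀ (by positivity)) hz
    rw [norm_inv, inv_le_inv₀ (norm_pos_iff.2 (hf0 z hz)) (by positivity)] at this
    exact absurd (hbij.mapsTo hz).2 this.not_gt

theorem exists_injOn_tendsto_norm_of_bijOn (h₁ : 1 < R₁) (h₂ : 1 < R₂)
    (hf : DifferentiableOn ℂ f (annulus 1 R₁)) (hbij : BijOn f (annulus 1 R₁) (annulus 1 R₂)) :
    ∃ g : ℂ → ℂ, DifferentiableOn ℂ g (annulus 1 R₁) ∧ InjOn g (annulus 1 R₁) ∧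
      (∀ z ∈ annulus 1 R₁, g z ≠ 0) ∧ Tendsto (‖g ·‖) (comap (‖·‖) (𝓝[>] 1)) (𝓝 1) ∧
      Tendsto (‖g ·‖) (comap (‖·‖) (𝓝[<] R₁)) (𝓝 R₂) := by
  have hf0 : ∀ z ∈ annulus 1 R₁, f z ≠ 0 := fun z hz =>
    ne_zero_of_mem_annulus zero_le_one (hbij.mapsTo hz)
  have hR₂ : (R₂ : ℂ) ≠ 0 := ofReal_ne_zero.2 (by linarith)
  rcases tendsto_norm_of_bijOn h₁ h₂ hf hbij with ⟨hin, hout⟩ | ⟨hin, hout⟩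
  · exact ⟨f, hf, hbij.injOn, hf0, hin, hout⟩
  have hnorm : (fun z => ‖(R₂ : ℂ) / f z‖) = fun z => R₂ / ‖f z‖ := by
    ext z; rw [norm_div, norm_real, Real.norm_of_nonneg (by linarith)]
  refine ⟨fun z => R₂ / f z, (differentiableOn_const _).div hf hf0,
    fun z hz w hw h => hbij.injOn hz hw ?_, fun z hz => div_ne_zero hR₂ (hf0 z hz), ?_, ?_⟩
  · simpa [div_eq_mul_inv, hR₂] using h
  · have := (tendsto_const_nhds (x := R₂)).div hin (by linarith)
    rw [div_self (by linarith)] at this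
    rw [hnorm]
    exact this
  · have := (tendsto_const_nhds (x := R₂)).div hout one_ne_zero
    rw [div_one] at this
    rw [hnorm]
    exact this

theorem norm_eq_rpow_of_tendsto {R₁ R₂ : ℝ} {f : ℂ → ℂ} (h₁ : 1 < R₁) (h₂ : 0 < R₂)
    (hf : DifferentiableOn ℂ f (annulus 1 R₁)) (hf0 : ∀ z ∈ annulus 1 R₁, f z ≠ 0)
    (hin : Tendsto (‖f ·‖) (comap (‖·‖) (𝓝[>] 1)) (𝓝 1))
    (hout : Tendsto (‖f ·‖) (comap (‖·‖) (𝓝[<] R₁)) (𝓝 R₂)) {z : ℂ} (hz : z ∈ annulus 1 R₁) :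
    ‖f z‖ = ‖z‖ ^ (Real.log R₂ / Real.log R₁) := by
  set α := Real.log R₂ / Real.log R₁
  have hR : R₁ ^ α = R₂ := by
    rw [Real.rpow_def_of_pos (by linarith), mul_div_cancel₀ _ (Real.log_pos h₁).ne',
      Real.exp_log h₂]
  have hpow_in (β : ℝ) : Tendsto (fun z : ℂ => ‖z‖ ^ β) (comap (‖·‖) (𝓝[>] (1 : ℝ))) (𝓝 1) := by
    simpa using (tendsto_comap.mono_right nhdsWithin_le_nhds).rpow_const (p := β)
      (Or.inl one_ne_zero)
  have hpow_out (β : ℝ) : Tendsto (fun z : ℂ => ‖z‖ ^ β) (comap (‖·‖) (𝓝[<] R₁)) (𝓝 (R₁ ^ β)) :=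
    (tendsto_comap.mono_right nhdsWithin_le_nhds).rpow_const (Or.inl (by positivity))
  have hupper : ‖f z‖ * ‖z‖ ^ (-α) ≤ 1 := by
    refine norm_mul_rpow_le_of_tendsto zero_le_one hf
      (by simpa using hin.mul (hpow_in (-α))) ?_ hz
    have := hout.mul (hpow_out (-α))
    rwa [Real.rpow_neg (by positivity), hR, mul_inv_cancel₀ h₂.ne'] at this
  have hlower : ‖(f z)⁻¹‖ * ‖z‖ ^ α ≤ 1 := by
    refine norm_mul_rpow_le_of_tendsto zero_le_one (hf.inv hf0)
      (by simpa using (hin.inv₀ one_ne_zero).mul (hpow_in α)) ?_ hz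
    have := (hout.inv₀ h₂.ne').mul (hpow_out α)
    rw [hR, inv_mul_cancel₀ h₂.ne'] at this
    simpa using this
  have hzα : 0 < ‖z‖ ^ α := Real.rpow_pos_of_pos (by linarith [hz.1]) α
  have hfz : 0 < ‖f z‖ := norm_pos_iff.2 (hf0 z hz)
  rw [Real.rpow_neg (norm_nonneg _), ← div_eq_mul_inv, div_le_one hzα] at hupper
  rw [norm_inv, inv_mul_le_iff₀ hfz, mul_one] at hlower
  exact le_antisymm hupper hlower

end Modulus

theorem eq_one_of_injOn_of_norm_eq_rpow {a b α : ℝ} {f : ℂ → ℂ} (ha : 0 ≤ a) (hab : a < b)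
    (hf : DifferentiableOn ℂ f (annulus a b)) (hinj : InjOn f (annulus a b)) (hα : 0 < α)
    (hnorm : ∀ z ∈ annulus a b, ‖f z‖ = ‖z‖ ^ α) : α = 1 := by
  have hpos : ∀ z ∈ annulus a b, 0 < ‖z‖ ^ α := fun z hz =>
    Real.rpow_pos_of_pos (norm_pos_iff.2 (ne_zero_of_mem_annulus ha hz)) α
  have hu : ∀ z ∈ annulus a b, ‖f z‖ * ‖z‖ ^ (-α) = 1 := fun z hz => by
    rw [hnorm z hz, Real.rpow_neg (norm_nonneg _), mul_inv_cancel₀ (hpos z hz).ne']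
  obtain ⟨z₀, hz₀⟩ := annulus_nonempty ha hab
  obtain ⟨c, hc⟩ := exists_forall_comp_exp_mul_exp_eq_of_isMaxOn (β := -α) ha hf hz₀
    (isMaxOn_iff.2 fun z hz => by rw [hu z hz, hu z₀ hz₀])
  have hfexp : ∀ ζ ∈ exp ⁻¹' annulus a b, f (exp ζ) = c * exp (α * ζ) := fun ζ hζ => by
    rw [← hc ζ hζ, mul_assoc, ← exp_add]
    simp
  set ζ₀ := log z₀
  have hζ₀ : ζ₀ ∈ exp ⁻¹' annulus a b := by
    rw [mem_preimage, exp_log (ne_zero_of_mem_annulus ha hz₀)]; exact hz₀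
  have hshift_mem (x : ℝ) : ζ₀ + x * (2 * Real.pi * I) ∈ exp ⁻¹' annulus a b := by
    convert add_mul_I_mem_exp_preimage_annulus hζ₀ (x * (2 * Real.pi)) using 2
    push_cast; ring
  have hshift (x : ℝ) :
      f (exp (ζ₀ + x * (2 * Real.pi * I))) =
        f (exp ζ₀) * exp ((α * x : ℝ) * (2 * Real.pi * I)) := by
    rw [hfexp _ (hshift_mem x), hfexp _ hζ₀, mul_assoc c, ← exp_add]
    congr 2
    push_cast
    ring
  have hf0 : f (exp ζ₀) ≠ 0 := norm_pos_iff.1 (hnorm _ hζ₀ ▸ hpos _ hζ₀)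
  obtain ⟨n, hn⟩ : ∃ n : ℤ, α = n := by
    refine exists_int_eq_of_exp_eq_one (mul_left_cancel₀ hf0 ?_)
    have := hshift 1
    rw [mul_one, Complex.ofReal_one, one_mul, exp_periodic] at this
    rw [mul_one, ← this]
  obtain ⟨m, hm⟩ : ∃ m : ℤ, α⁻¹ = m := by
    refine exists_int_eq_of_exp_eq_one (mul_left_cancel₀ (exp_ne_zero ζ₀) ?_)
    rw [← exp_add, mul_one]
    refine hinj (hshift_mem _) hζ₀ ?_
    rw [hshift, mul_inv_cancel₀ hα.ne', Complex.ofReal_one, one_mul, exp_two_pi_mul_I, mul_one]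
  have hnm : n * m = 1 := by
    exact_mod_cast (show (n * m : ℝ) = 1 by rw [← hn, ← hm, mul_inv_cancel₀ hα.ne'])
  rw [hn, Int.eq_one_of_mul_eq_one_right (by exact_mod_cast hn ▸ hα.le) hnm, Int.cast_one]

/-- Conformal invariance of the modulus of an annulus. -/
theorem annulus_modulus_conformal_invariant (R₁ R₂ : ℝ) (h₁ : 1 < R₁) (h₂ : 1 < R₂)
    (h : ∃ f : ℂ → ℂ,
      DifferentiableOn ℂ f {z : ℂ | 1 < ‖z‖ ∧ ‖z‖ < R₁} ∧
      Set.BijOn f {z : ℂ | 1 < ‖z‖ ∧ ‖z‖ < R₁}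
        {z : ℂ | 1 < ‖z‖ ∧ ‖z‖ < R₂}) :
    R₁ = R₂ := by
  obtain ⟨f, hf, hbij⟩ := h
  obtain ⟨g, hg, hginj, hg0, hin, hout⟩ := exists_injOn_tendsto_norm_of_bijOn h₁ h₂ hf hbij
  have hα : Real.log R₂ / Real.log R₁ = 1 :=
    eq_one_of_injOn_of_norm_eq_rpow zero_le_one h₁ hg hginj
      (div_pos (Real.log_pos h₂) (Real.log_pos h₁))
      fun z hz => norm_eq_rpow_of_tendsto h₁ (by linarith) hg hg0 hin hout hz
  rw [div_eq_one_iff_eq (Real.log_pos h₁).ne'] at hα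
  exact (Real.log_injOn_pos (mem_Ioi.2 (by linarith)) (mem_Ioi.2 (by linarith)) hα).symm
end

section
/- There is no holomorphic bijection from the punctured disk {z : 0 < |z| < 1} onto any annulus {z : r < |z| < 1} with 0 < r < 1. -/
/-!
Removing the singularity at `0` (the map is bounded by `1`) extends `f` to a holomorphic,
nonconstant, hence open map `F` on the unit disk. By openness `F` stays injective, so the new
value `p = F 0` lies outside the annulus; it is nonzero because it is a limit of points of the
annulus. But then `F` maps the disk onto the annulus with `p` added, and this set is not open:
moving `p` slightly along its ray, inward or outward, leaves it.
-/

open Set Metric Filter Function Topology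

theorem apply_notMem_image_diff_singleton_of_injOn {X Y : Type*} [TopologicalSpace X]
    [T2Space X] [TopologicalSpace Y] [∀ y : Y, (𝓝[≠] y).NeBot] {F : X → Y} {U : Set X} {c : X}
    (hU : IsOpen U) (hF : ∀ s ⊆ U, IsOpen s → IsOpen (F '' s)) (hinj : InjOn F (U \ {c}))
    (hc : c ∈ U) : F c ∉ F '' (U \ {c}) := by
  rintro ⟨w, ⟨hwU, hwc⟩, hFw⟩
  obtain ⟨V, W, hV, hW, hcV, hwW, hVW⟩ := t2_separation (Ne.symm hwc)
  have hnhds : F '' (V ∩ U) ∩ F '' (W ∩ U) ∈ 𝓝 (F c) :=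
    ((hF _ inter_subset_right (hV.inter hU)).inter (hF _ inter_subset_right (hW.inter hU))).mem_nhds
      ⟨mem_image_of_mem F ⟨hcV, hc⟩, hFw ▸ mem_image_of_mem F ⟨hwW, hwU⟩⟩
  -- Both small images contain a common value other than `F c`; its two preimages are distinct.
  obtain ⟨y, hy, ⟨z₁, ⟨hz₁V, hz₁U⟩, rfl⟩, ⟨z₂, ⟨hz₂W, hz₂U⟩, hz₂⟩⟩ :=
    Filter.nonempty_of_mem (inter_mem_nhdsWithin {F c}ᶜ hnhds)
  have hz₁c : z₁ ≠ c := fun h => hy (h ▸ rfl)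
  have hz₂c : z₂ ≠ c := fun h => hVW.ne_of_mem hcV (h ▸ hz₂W) rfl
  exact hVW.ne_of_mem hz₁V hz₂W (hinj ⟨hz₁U, hz₁c⟩ ⟨hz₂U, hz₂c⟩ hz₂.symm)

theorem not_isOpen_insert_annulus {E : Type*} [NormedAddCommGroup E] [NormedSpace ℝ E]
    {a b : ℝ} {p : E} (hp0 : p ≠ 0) (hp : p ∉ {x : E | a < ‖x‖ ∧ ‖x‖ < b}) :
    ¬ IsOpen (insert p {x : E | a < ‖x‖ ∧ ‖x‖ < b}) := by
  intro hopen
  have hray : ∀ᶠ t : ℝ in 𝓝 1, 0 < t ∧ t • p ∈ insert p {x : E | a < ‖x‖ ∧ ‖x‖ < b} :=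
    (lt_mem_nhds one_pos).and <| (Continuous.tendsto' (by fun_prop) 1 p (one_smul ℝ p)).eventually
      (hopen.mem_nhds (mem_insert _ _))
  have hnorm : ∀ t : ℝ, t ≠ 1 → 0 < t ∧ t • p ∈ insert p {x : E | a < ‖x‖ ∧ ‖x‖ < b} →
      a < t * ‖p‖ ∧ t * ‖p‖ < b := by
    rintro t ht1 ⟨ht0, ht⟩
    have hne : t • p ≠ p := fun h => ht1 (smul_left_injective ℝ hp0 (h.trans (one_smul ℝ p).symm))
    simpa [norm_smul, abs_of_pos ht0] using ht.resolve_left hne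
  rcases not_and_or.1 hp with ha | hb
  · obtain ⟨t, ht, ht1⟩ := ((hray.filter_mono nhdsWithin_le_nhds).and
      (self_mem_nhdsWithin : ∀ᶠ t in 𝓝[<] (1 : ℝ), t < 1)).exists
    nlinarith [hnorm t ht1.ne ht, norm_nonneg p]
  · obtain ⟨t, ht, ht1⟩ := ((hray.filter_mono nhdsWithin_le_nhds).and
      (self_mem_nhdsWithin : ∀ᶠ t in 𝓝[>] (1 : ℝ), 1 < t)).exists
    nlinarith [hnorm t ht1.ne' ht, norm_nonneg p]

theorem DifferentiableOn.isOpen_image_of_injOn {F : ℂ → ℂ} {U s : Set ℂ}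
    (hF : DifferentiableOn ℂ F U) (hU : IsOpen U) (hUc : IsPreconnected U) (hsU : s ⊆ U)
    (hinj : InjOn F s) (hs : s.Nontrivial) : ∀ t ⊆ U, IsOpen t → IsOpen (F '' t) := by
  refine ((hF.analyticOnNhd hU).is_constant_or_isOpen hUc).resolve_left ?_
  rintro ⟨w, hw⟩
  obtain ⟨x, hx, y, hy, hxy⟩ := hs
  exact hxy (hinj hx hy ((hw x (hsU hx)).trans (hw y (hsU hy)).symm))

theorem punctured_disk_not_equiv_annulus_general (r : ℝ) (hr0 : 0 < r) :
    ¬ ∃ f : ℂ → ℂ,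
      DifferentiableOn ℂ f {z : ℂ | 0 < ‖z‖ ∧ ‖z‖ < 1} ∧
      Set.BijOn f {z : ℂ | 0 < ‖z‖ ∧ ‖z‖ < 1}
        {z : ℂ | r < ‖z‖ ∧ ‖z‖ < 1} := by
  rintro ⟨f, hdf, hbij⟩
  set A : Set ℂ := {z : ℂ | r < ‖z‖ ∧ ‖z‖ < 1}
  have hS : {z : ℂ | 0 < ‖z‖ ∧ ‖z‖ < 1} = ball 0 1 \ {0} := by
    ext z; simp [and_comm]
  rw [hS] at hdf hbij
  set F := update f 0 (limUnder (𝓝[≠] 0) f)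
  have hFf : EqOn F f (ball 0 1 \ {0}) := fun z hz => update_of_ne hz.2 _ _
  have hFd : DifferentiableOn ℂ F (ball 0 1) :=
    Complex.differentiableOn_update_limUnder_of_bddAbove (ball_mem_nhds 0 one_pos) hdf
      ⟨1, forall_mem_image.2 fun z hz => (hbij.mapsTo hz).2.le⟩
  have hFinj : InjOn F (ball 0 1 \ {0}) := hbij.injOn.congr hFf.symm
  have hnt : (ball (0 : ℂ) 1 \ {0}).Nontrivial := by
    refine ⟨1 / 2, ?_, -1 / 2, ?_, by norm_num⟩ <;> norm_num
  have hFopen : ∀ s ⊆ ball 0 1, IsOpen s → IsOpen (F '' s) :=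
    hFd.isOpen_image_of_injOn isOpen_ball (convex_ball 0 1).isPreconnected sdiff_subset
      hFinj hnt
  have hFS : F '' (ball 0 1 \ {0}) = A := hFf.image_eq.trans hbij.image_eq
  have hF0A : F 0 ∉ A := hFS ▸ apply_notMem_image_diff_singleton_of_injOn isOpen_ball hFopen
    hFinj (mem_ball_self one_pos)
  have hF0 : F 0 ≠ 0 := by
    have hcl : F 0 ∈ closure A := by
      refine mem_closure_of_tendsto (b := 𝓝[≠] 0) ((hFd.continuousOn.continuousAt
        (ball_mem_nhds 0 one_pos)).tendsto.mono_left nhdsWithin_le_nhds) ?_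
      filter_upwards [self_mem_nhdsWithin, nhdsWithin_le_nhds (ball_mem_nhds 0 one_pos)]
        with z hz0 hz1
      exact hFS ▸ mem_image_of_mem F ⟨hz1, hz0⟩
    have hr : r ≤ ‖F 0‖ :=
      closure_minimal (fun z hz => hz.1.le) (isClosed_le continuous_const continuous_norm) hcl
    exact norm_pos_iff.1 (hr0.trans_le hr)
  have himage : F '' ball 0 1 = insert (F 0) A := by
    rw [← hFS, ← image_insert_eq, insert_sdiff_singleton, insert_eq_of_mem (mem_ball_self one_pos)]
  exact not_isOpen_insert_annulus hF0 hF0A (himage ▸ hFopen _ subset_rfl isOpen_ball)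

/-- The punctured unit disk is not conformally equivalent to any nondegenerate
annulus. -/
theorem punctured_disk_not_equiv_annulus (r : ℝ) (hr0 : 0 < r) (hr1 : r < 1) :
    ¬ ∃ f : ℂ → ℂ,
      DifferentiableOn ℂ f {z : ℂ | 0 < ‖z‖ ∧ ‖z‖ < 1} ∧
      Set.BijOn f {z : ℂ | 0 < ‖z‖ ∧ ‖z‖ < 1}
        {z : ℂ | r < ‖z‖ ∧ ‖z‖ < 1} :=
  punctured_disk_not_equiv_annulus_general r hr0
end
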